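/- arXiv:2101.04871 — 4 statements merged into one kernel-verified Lean document; each statement's English description precedes it below -/
import Mathlib

section
/- Let G be a group and let j ≥ 1. Suppose φ = ⁅g₁,h₁⁆⁅g₂,h₂⁆⋯⁅g_m,h_m⁆ is a product of commutators such that for every 1 ≤ l ≤ m either g_l ∈ C^{(j-1)}(G) or h_l ∈ C^{(j-1)}(G). Then for every natural number k there exists α_k ∈ C^{(j+1)}(G) such that φ^{k²} = ⁅g₁^k,h₁^k⁆⁅g₂^k,h₂^k⁆⋯⁅g_m^k,h_m^k⁆ · α_k. -/
/-!
Modulo `C^{(j+1)}(G)` each `⁅g_l, h_l⁆` lies in the image of `C^{(j)}(G)`, hence is central.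
Once `⁅a, b⁆` commutes with `a` and `b`, the commutator is bimultiplicative in the exponents,
`⁅a ^ m, b ^ n⁆ = ⁅a, b⁆ ^ (m * n)`, and the `k²`-th power of a product of central elements is
the product of their `k²`-th powers, so `φ ^ k² ≡ ∏ ⁅g_l ^ k, h_l ^ k⁆` modulo `C^{(j+1)}(G)`.
-/

open scoped commutatorElement

section Commutator

variable {G : Type*} [Group G] {a b : G}

theorem commutatorElement_pow_right_of_commute (hb : Commute b ⁅a, b⁆) (n : ℕ) :
    ⁅a, b ^ n⁆ = ⁅a, b⁆ ^ n := by
  induction n with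
  | zero => simp
  | succ n ih =>
    calc ⁅a, b ^ (n + 1)⁆ = ⁅a, b ^ n⁆ * (b ^ n * ⁅a, b⁆ * (b ^ n)⁻¹) := by
          simp only [commutatorElement_def]; group
      _ = ⁅a, b⁆ ^ (n + 1) := by rw [ih, (hb.pow_left n).eq, mul_inv_cancel_right, pow_succ]

theorem commutatorElement_pow_left_of_commute (ha : Commute a ⁅a, b⁆) (n : ℕ) :
    ⁅a ^ n, b⁆ = ⁅a, b⁆ ^ n := by
  have ha' : Commute a ⁅b, a⁆ := by rw [← commutatorElement_inv]; exact ha.inv_right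
  rw [← commutatorElement_inv, commutatorElement_pow_right_of_commute ha', ← commutatorElement_inv,
    inv_pow, inv_inv]

theorem commutatorElement_pow_pow_of_commute (ha : Commute a ⁅a, b⁆) (hb : Commute b ⁅a, b⁆)
    (m n : ℕ) : ⁅a ^ m, b ^ n⁆ = ⁅a, b⁆ ^ (m * n) := by
  have hright := commutatorElement_pow_right_of_commute hb n
  rw [commutatorElement_pow_left_of_commute (by rw [hright]; exact ha.pow_right n), hright,
    ← pow_mul']

theorem List.prod_pow_of_forall_mem_center {l : List G} (hl : ∀ x ∈ l, x ∈ Subgroup.center G)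
    (n : ℕ) : l.prod ^ n = (l.map (· ^ n)).prod := by
  induction l with
  | nil => simp
  | cons x l ih =>
    have hx : Commute x l.prod := (Subgroup.mem_center_iff.mp (hl x List.mem_cons_self) _).symm
    rw [List.prod_cons, hx.mul_pow, ih fun y hy => hl y (List.mem_cons_of_mem x hy),
      List.map_cons, List.prod_cons]

end Commutator

namespace Subgroup

variable {G : Type*} [Group G]

theorem commutatorElement_mem_top_lowerCentralSeries {j : ℕ} {a b : G}
    (h : a ∈ (⊤ : Subgroup G).lowerCentralSeries (j - 1) ∨
      b ∈ (⊤ : Subgroup G).lowerCentralSeries (j - 1)) :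
    ⁅a, b⁆ ∈ (⊤ : Subgroup G).lowerCentralSeries j := by
  cases j with
  | zero => exact mem_top _
  | succ j =>
    rw [Nat.add_sub_cancel] at h
    rw [lowerCentralSeries_succ]
    rcases h with ha | hb
    · exact commutator_mem_commutator ha (mem_top b)
    · rw [commutator_comm]
      exact commutator_mem_commutator (mem_top a) hb

theorem mk_mem_center_of_mem_top_lowerCentralSeries {n : ℕ} {x : G}
    (hx : x ∈ (⊤ : Subgroup G).lowerCentralSeries n) :
    (x : G ⧸ (⊤ : Subgroup G).lowerCentralSeries (n + 1)) ∈ center _ := by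
  rw [mem_center_iff]
  intro q
  induction q using QuotientGroup.induction_on with
  | H b =>
    have hxb : ((⁅x, b⁆ : G) : G ⧸ (⊤ : Subgroup G).lowerCentralSeries (n + 1)) = 1 :=
      (QuotientGroup.eq_one_iff _).mpr (commutator_mem_commutator hx (mem_top b))
    rw [← QuotientGroup.mk'_apply, map_commutatorElement] at hxb
    exact (commutatorElement_eq_one_iff_mul_comm.mp hxb).symm

end Subgroup

theorem stmt0_general {G : Type*} [Group G] (j : ℕ) (m : ℕ)
    (g h : Fin m → G)
    (hgh : ∀ l : Fin m, g l ∈ (⊤ : Subgroup G).lowerCentralSeries (j - 1) ∨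
      h l ∈ (⊤ : Subgroup G).lowerCentralSeries (j - 1))
    (φ : G) (hφ : φ = (List.ofFn fun l : Fin m => ⁅g l, h l⁆).prod) :
    ∀ k : ℕ, ∃ α ∈ (⊤ : Subgroup G).lowerCentralSeries (j + 1),
      φ ^ (k ^ 2) = (List.ofFn fun l : Fin m => ⁅(g l) ^ k, (h l) ^ k⁆).prod * α := by
  intro k
  set π := QuotientGroup.mk' ((⊤ : Subgroup G).lowerCentralSeries (j + 1))
  have hcentral : ∀ l, π ⁅g l, h l⁆ ∈ Subgroup.center _ := fun l =>
    Subgroup.mk_mem_center_of_mem_top_lowerCentralSeries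
      (Subgroup.commutatorElement_mem_top_lowerCentralSeries (hgh l))
  have hpow : ∀ l, π ⁅g l ^ k, h l ^ k⁆ = π ⁅g l, h l⁆ ^ (k ^ 2) := fun l => by
    have hcomm := Subgroup.mem_center_iff.mp (hcentral l)
    rw [map_commutatorElement] at hcomm
    rw [map_commutatorElement π (g l ^ k), map_pow, map_pow, sq,
      commutatorElement_pow_pow_of_commute (hcomm (π (g l))) (hcomm (π (h l))),
      map_commutatorElement]
  have hmod : π (φ ^ (k ^ 2)) = π (List.ofFn fun l => ⁅g l ^ k, h l ^ k⁆).prod := by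
    rw [map_pow, hφ, map_list_prod, List.map_ofFn, List.prod_pow_of_forall_mem_center,
      List.map_ofFn, map_list_prod, List.map_ofFn]
    · exact congrArg _ (congrArg _ (funext fun l => (hpow l).symm))
    · rintro x hx
      obtain ⟨l, rfl⟩ := List.mem_ofFn.mp hx
      exact hcentral l
  exact ⟨_, QuotientGroup.eq.mp hmod.symm, (mul_inv_cancel_left _ _).symm⟩

/-- Let `G` be a group and `j ≥ 1`. Suppose
`φ = ⁅g₁,h₁⁆⋯⁅g_m,h_m⁆` where for each `l` either `g l` or `h l` lies in
`C^{(j-1)}(G)` (the `(j-1)`-st term of the descending central series,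
`lowerCentralSeries G (j-1)`). Then for every `k` there is
`α_k ∈ C^{(j+1)}(G)` with `φ^(k²) = ⁅g₁^k,h₁^k⁆⋯⁅g_m^k,h_m^k⁆ * α_k`. -/
theorem stmt0 {G : Type*} [Group G] (j : ℕ) (hj : 1 ≤ j) (m : ℕ)
    (g h : Fin m → G)
    (hgh : ∀ l : Fin m, g l ∈ (⊤ : Subgroup G).lowerCentralSeries (j - 1) ∨
      h l ∈ (⊤ : Subgroup G).lowerCentralSeries (j - 1))
    (φ : G) (hφ : φ = (List.ofFn fun l : Fin m => ⁅g l, h l⁆).prod) :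
    ∀ k : ℕ, ∃ α ∈ (⊤ : Subgroup G).lowerCentralSeries (j + 1),
      φ ^ (k ^ 2) = (List.ofFn fun l : Fin m => ⁅(g l) ^ k, (h l) ^ k⁆).prod * α :=
  stmt0_general j m g h hgh φ hφ
end

section
/- Let G be a group and f ∈ G. Let H = ⟨G', f⟩ be the subgroup of G generated by the derived subgroup G' = C^{(1)}(G) together with f. Then for every j ≥ 1 the j-th term of the descending central series of H, viewed as a subgroup of G, is contained in C^{(j+1)}(G), i.e. C^{(j)}(H) ⊆ C^{(j+1)}(G). -/
/-!
Modulo `C^{(2)}(G) = ⁅G', G⁆` the derived subgroup `G'` becomes central, so the image of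
`H = ⟨G', f⟩` in `G ⧸ C^{(2)}(G)` is generated by central elements and one further element, hence
is abelian. Thus `C^{(1)}(H) ≤ C^{(2)}(G)`, and taking commutators with `H ≤ G` on both sides
propagates this shift by one along the two series.
-/

open Subgroup

namespace Subgroup

variable {G : Type*} [Group G]

theorem isMulCommutative_sup_closure_singleton {Z : Subgroup G} (hZ : Z ≤ center G) (x : G) :
    IsMulCommutative (Z ⊔ closure {x} : Subgroup G) := by
  rw [← closure_eq Z, ← closure_union]
  refine isMulCommutative_closure ?_
  rintro a (ha | rfl) b (hb | rfl)
  · exact mem_center_iff.mp (hZ hb) a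
  · exact (mem_center_iff.mp (hZ ha) _).symm
  · exact mem_center_iff.mp (hZ hb) _
  · rfl

theorem map_mk'_le_center_of_commutator_le {A N : Subgroup G} [N.Normal] (hA : ⁅A, ⊤⁆ ≤ N) :
    A.map (QuotientGroup.mk' N) ≤ center (G ⧸ N) := by
  rw [map_le_iff_le_comap, ← upperCentralSeriesStep_eq_comap_center]
  exact fun a ha y ↦ commutator_le.mp hA a ha y (mem_top y)

theorem commutator_sup_closure_singleton_le {A N : Subgroup G} [N.Normal] (hA : ⁅A, ⊤⁆ ≤ N)
    (g : G) : ⁅A ⊔ closure {g}, A ⊔ closure {g}⁆ ≤ N := by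
  have hcomm := isMulCommutative_sup_closure_singleton (map_mk'_le_center_of_commutator_le hA)
    (QuotientGroup.mk' N g)
  rw [← Set.image_singleton, ← MonoidHom.map_closure, ← map_sup, ← commutator_self_eq_bot_iff,
    ← map_commutator, map_eq_bot_iff, QuotientGroup.ker_mk'] at hcomm
  exact hcomm

theorem lowerCentralSeries_le_top_lowerCentralSeries_add {S : Subgroup G} {k m : ℕ}
    (h : S.lowerCentralSeries k ≤ (⊤ : Subgroup G).lowerCentralSeries (k + m)) {j : ℕ}
    (hj : k ≤ j) : S.lowerCentralSeries j ≤ (⊤ : Subgroup G).lowerCentralSeries (j + m) := by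
  induction j, hj using Nat.le_induction with
  | base => exact h
  | succ j _ ih =>
    rw [lowerCentralSeries_succ, Nat.add_right_comm, lowerCentralSeries_succ]
    exact commutator_mono ih le_top

end Subgroup

/-- Let `G` be a group, `f ∈ G`, and let
`H = ⟨G', f⟩` be the subgroup generated by the derived subgroup
`G' = C^{(1)}(G) = lowerCentralSeries G 1` together with `f`. Then for every
`j ≥ 1` the `j`-th term of the descending central series of `H`, viewed inside
`G`, is contained in `C^{(j+1)}(G)`. -/
theorem stmt2 {G : Type*} [Group G] (f : G) :
    ∀ j : ℕ, 1 ≤ j →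
      ((⊤ : Subgroup (↥((⊤ : Subgroup G).lowerCentralSeries 1 ⊔ Subgroup.closure {f}))).lowerCentralSeries j).map
          ((⊤ : Subgroup G).lowerCentralSeries 1 ⊔ Subgroup.closure {f}).subtype
        ≤ (⊤ : Subgroup G).lowerCentralSeries (j + 1) := by
  intro j hj
  rw [top_subtype_lowerCentralSeries]
  exact lowerCentralSeries_le_top_lowerCentralSeries_add
    (commutator_sup_closure_singleton_le le_rfl f) hj
end

section
/- Let S be a nonempty compact Hausdorff topological space and let G be a group of homeomorphisms of S (a subgroup of the homeomorphism group of S). Suppose there exists a natural number m ≥ 1 such that every finitely generated subgroup H of G has a finite orbit with at most m elements, i.e. there is a point z ∈ S whose H-orbit {h(z) : h ∈ H} is finite with at most m elements. Then G itself has a finite orbit with at most m elements: there exists z ∈ S whose G-orbit {g(z) : g ∈ G} has at most m elements. -/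
/-!
For finite `t ⊆ G`, the points whose `t`-orbit has at most `m` elements form a closed set: its
complement is the union, over `m + 1` elements of `t`, of the open sets where they take pairwise
distinct values (this is where Hausdorffness enters). These closed sets are nonempty, by the
hypothesis applied to the subgroup generated by `t`, and directed, so by compactness they have a
common point `z`. Any `m + 1` distinct points of the `G`-orbit of `z` already lie in the orbit of
some finite `t`, so the `G`-orbit of `z` has at most `m` elements.
-/

open Set

theorem Set.coe_lt_encard_image_iff {α β : Type*} {f : α → β} {s : Set α} {n : ℕ} :
    (n : ℕ∞) < (f '' s).encard ↔ ∃ t ⊆ s, t.encard = n + 1 ∧ InjOn f t := by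
  constructor
  · intro hn
    obtain ⟨u, hus, hu⟩ := exists_subset_encard_eq (Order.add_one_le_of_lt hn)
    obtain ⟨t, hts, hbij⟩ := exists_subset_bijOn (s ∩ f ⁻¹' u) f
    rw [image_inter_preimage, inter_eq_right.2 hus] at hbij
    exact ⟨t, hts.trans inter_subset_left, by rw [← hbij.injOn.encard_image, hbij.image_eq, hu],
      hbij.injOn⟩
  · rintro ⟨t, hts, ht, hinj⟩
    calc (n : ℕ∞) < n + 1 := mod_cast n.lt_succ_self
      _ = (f '' t).encard := by rw [hinj.encard_image, ht]
      _ ≤ (f '' s).encard := encard_le_encard (image_mono hts)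

section

variable {ι X Y : Type*} [TopologicalSpace X] [TopologicalSpace Y] [T2Space Y]

theorem isOpen_setOf_injOn_eval {F : ι → X → Y} {t : Set ι} (ht : t.Finite)
    (hF : ∀ i ∈ t, Continuous (F i)) : IsOpen {x | InjOn (fun i => F i x) t} := by
  have : {x | InjOn (fun i => F i x) t} = ⋂ i ∈ t, ⋂ j ∈ t, {x | F i x = F j x → i = j} := by
    ext x; simp [InjOn]
  rw [this]
  refine ht.isOpen_biInter fun i hi => ht.isOpen_biInter fun j hj => ?_
  by_cases hij : i = j
  · simp [hij]
  · simpa [hij] using isOpen_ne_fun (hF i hi) (hF j hj)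

theorem isClosed_setOf_encard_image_eval_le {F : ι → X → Y} {T : Set ι}
    (hF : ∀ i ∈ T, Continuous (F i)) (m : ℕ) :
    IsClosed {x | ((fun i => F i x) '' T).encard ≤ m} := by
  have : {x | ((fun i => F i x) '' T).encard ≤ m}ᶜ =
      ⋃ t ∈ {t | t ⊆ T ∧ t.encard = m + 1}, {x | InjOn (fun i => F i x) t} := by
    ext x; simp [coe_lt_encard_image_iff, and_assoc]
  rw [← isOpen_compl_iff, this]
  refine isOpen_biUnion fun t ⟨htT, ht⟩ => isOpen_setOf_injOn_eval ?_ fun i hi => hF i (htT hi)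
  exact encard_ne_top_iff.1 (by simp [ht])

theorem exists_encard_image_eval_le_of_forall_finite [CompactSpace X] {F : ι → X → Y} {T : Set ι}
    (hF : ∀ i ∈ T, Continuous (F i)) (m : ℕ)
    (h : ∀ t ⊆ T, t.Finite → ∃ x, ((fun i => F i x) '' t).encard ≤ m) :
    ∃ x, ((fun i => F i x) '' T).encard ≤ m := by
  let K : {t : Set ι // t ⊆ T ∧ t.Finite} → Set X :=
    fun t => {x | ((fun i => F i x) '' t.1).encard ≤ m}
  have hK_closed t : IsClosed (K t) :=
    isClosed_setOf_encard_image_eval_le (fun i hi => hF i (t.2.1 hi)) m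
  have hK_directed : Directed (· ⊇ ·) K := fun t u =>
    ⟨⟨t.1 ∪ u.1, union_subset t.2.1 u.2.1, t.2.2.union u.2.2⟩,
      fun _ hx => (encard_le_encard (image_mono subset_union_left)).trans hx,
      fun _ hx => (encard_le_encard (image_mono subset_union_right)).trans hx⟩
  have : Nonempty {t : Set ι // t ⊆ T ∧ t.Finite} := ⟨⟨∅, empty_subset T, finite_empty⟩⟩
  obtain ⟨x, hx⟩ := IsCompact.nonempty_iInter_of_directed_nonempty_isCompact_isClosed K
    hK_directed (fun t => h t.1 t.2.1 t.2.2) (fun t => (hK_closed t).isCompact) hK_closed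
  refine ⟨x, not_lt.1 fun hlt => ?_⟩
  obtain ⟨t, htT, ht, hinj⟩ := coe_lt_encard_image_iff.1 hlt
  have htfin : t.Finite := encard_ne_top_iff.1 (by simp [ht])
  have := mem_iInter.1 hx ⟨t, htT, htfin⟩
  simp only [K, mem_ofPred_eq, hinj.encard_image, ht] at this
  exact absurd this (not_le.2 (mod_cast m.lt_succ_self))

end

theorem stmt3_general {S : Type*} [TopologicalSpace S] [CompactSpace S] [T2Space S]
    (G : Subgroup (Equiv.Perm S))
    (hhom : ∀ g ∈ G, IsHomeomorph (⇑g : S → S)) (m : ℕ)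
    (h : ∀ H : Subgroup (Equiv.Perm S), H ≤ G → H.FG →
      ∃ z : S, {x : S | ∃ g ∈ H, g z = x}.Finite ∧
        {x : S | ∃ g ∈ H, g z = x}.ncard ≤ m) :
    ∃ z : S, {x : S | ∃ g ∈ G, g z = x}.Finite ∧
      {x : S | ∃ g ∈ G, g z = x}.ncard ≤ m := by
  suffices ∃ z : S, ((fun g : Equiv.Perm S => g z) '' G).encard ≤ m from
    this.imp fun z hz => encard_le_coe_iff_finite_ncard_le.1 hz
  refine exists_encard_image_eval_le_of_forall_finite (fun g hg => (hhom g hg).continuous) m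
    fun t htG ht => ?_
  obtain ⟨z, hz⟩ := h (Subgroup.closure t) ((Subgroup.closure_le G).2 htG)
    ((Subgroup.fg_iff _).2 ⟨t, rfl, ht⟩)
  exact ⟨z, (encard_le_encard (image_mono Subgroup.subset_closure)).trans
    (encard_le_coe_iff_finite_ncard_le.2 hz)⟩

/-- Let `S` be a nonempty compact Hausdorff space and `G` a
group of homeomorphisms of `S` (a subgroup of the group of bijections of `S`,
each of whose elements is a homeomorphism). If there is `m ≥ 1` such that every
finitely generated subgroup `H ≤ G` has a finite orbit with at most `m`
elements, then `G` itself has a finite orbit with at most `m` elements. -/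
theorem stmt3 {S : Type*} [TopologicalSpace S] [CompactSpace S] [T2Space S]
    [Nonempty S] (G : Subgroup (Equiv.Perm S))
    (hhom : ∀ g ∈ G, IsHomeomorph (⇑g : S → S)) (m : ℕ) (hm : 1 ≤ m)
    (h : ∀ H : Subgroup (Equiv.Perm S), H ≤ G → H.FG →
      ∃ z : S, {x : S | ∃ g ∈ H, g z = x}.Finite ∧
        {x : S | ∃ g ∈ H, g z = x}.ncard ≤ m) :
    ∃ z : S, {x : S | ∃ g ∈ G, g z = x}.Finite ∧
      {x : S | ∃ g ∈ G, g z = x}.ncard ≤ m :=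
  stmt3_general G hhom m h
end

section
/- Let a ≥ 1 be an integer and let A be an invertible a × a matrix with rational entries. Suppose there exists c ∈ ℚ such that the trace of A^m equals c for every integer m with 1 ≤ m ≤ a + 1. Then the trace of A^m equals c for every integer m ≥ 1, and moreover c = a. -/
/-!
By Cayley–Hamilton the traces `t m = tr (A ^ m)` satisfy the linear recurrence whose
characteristic polynomial is the (monic, degree `a`) characteristic polynomial `p` of `A`.
A monic recurrence of order `a` is determined by `a` consecutive values, and the extra value
`t (a + 1) = c` shows that the constant sequence `c` is itself a solution; hence `t m = c` for
all `m ≥ 1`. Since `A` is invertible, `p.coeff 0 ≠ 0`, so the recurrence can also be run one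
step backwards, which gives `a = tr (A ^ 0) = c`.
-/

open Polynomial Finset

def SatisfiesRecurrence {R : Type*} [CommRing R] (p : R[X]) (t : ℕ → R) : Prop :=
  ∀ m, ∑ i ∈ range (p.natDegree + 1), p.coeff i * t (m + i) = 0

namespace SatisfiesRecurrence

variable {R : Type*} [CommRing R] {p : R[X]} {t : ℕ → R}

theorem eval_one_mul_eq_zero (ht : SatisfiesRecurrence p t) {k : ℕ} {c : R}
    (hc : ∀ i ≤ p.natDegree, t (k + i) = c) : p.eval 1 * c = 0 := by
  rw [eval_eq_sum_range, sum_mul, ← ht k]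
  refine sum_congr rfl fun i hi => ?_
  rw [one_pow, mul_one, hc i (Nat.lt_succ_iff.mp (mem_range.mp hi))]

theorem sub_const (ht : SatisfiesRecurrence p t) {c : R} (hc : p.eval 1 * c = 0) :
    SatisfiesRecurrence p (fun m => t m - c) := by
  intro m
  simp only [mul_sub, sum_sub_distrib, ht m, ← sum_mul, zero_sub, neg_eq_zero]
  simpa [eval_eq_sum_range] using hc

theorem eq_zero_of_eq_zero_on_window (ht : SatisfiesRecurrence p t) (hp : p.Monic) {k : ℕ}
    (h : ∀ i < p.natDegree, t (k + i) = 0) (i : ℕ) : t (k + i) = 0 := by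
  induction i using Nat.strong_induction_on with
  | _ i ih =>
    rcases lt_or_ge i p.natDegree with hi | hi
    · exact h i hi
    obtain ⟨j, rfl⟩ := Nat.exists_eq_add_of_le' hi
    have hrec := ht (k + j)
    rw [sum_range_succ, hp.coeff_natDegree, one_mul, add_assoc] at hrec
    rwa [sum_eq_zero fun l hl => by
      rw [add_assoc, ih (j + l) (by simp at hl; omega), mul_zero], zero_add] at hrec

theorem eq_of_eq_on_window (ht : SatisfiesRecurrence p t) (hp : p.Monic) {k : ℕ} {c : R}
    (hc : ∀ i ≤ p.natDegree, t (k + i) = c) (i : ℕ) : t (k + i) = c :=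
  sub_eq_zero.mp <| (ht.sub_const (ht.eval_one_mul_eq_zero hc)).eq_zero_of_eq_zero_on_window
    hp (fun i hi => sub_eq_zero.mpr (hc i hi.le)) i

theorem apply_zero_eq [NoZeroDivisors R] (ht : SatisfiesRecurrence p t) (hp : p.coeff 0 ≠ 0)
    {c : R} (hc : ∀ i, t (i + 1) = c) : t 0 = c := by
  have hs := ht.sub_const (c := c) (ht.eval_one_mul_eq_zero (k := 1) fun i _ => by
    rw [add_comm]; exact hc i) 0
  rw [sum_range_succ', sum_eq_zero fun i _ => by simp [hc], zero_add, zero_add] at hs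
  exact sub_eq_zero.mp ((mul_eq_zero.mp hs).resolve_left hp)

end SatisfiesRecurrence

theorem Matrix.satisfiesRecurrence_trace_pow {n R : Type*} [Fintype n] [DecidableEq n]
    [CommRing R] {A : Matrix n n R} {p : R[X]} (hp : aeval A p = 0) :
    SatisfiesRecurrence p (fun m => (A ^ m).trace) := by
  intro m
  have h := congrArg (fun B => (A ^ m * B).trace) hp
  simpa [aeval_eq_sum_range, mul_sum, trace_sum, pow_add] using h

theorem stmt7_general (a : ℕ) (A : Matrix (Fin a) (Fin a) ℚ)
    (hA : IsUnit A) (c : ℚ)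
    (hc : ∀ m : ℕ, 1 ≤ m → m ≤ a + 1 → (A ^ m).trace = c) :
    (∀ m : ℕ, 1 ≤ m → (A ^ m).trace = c) ∧ c = a := by
  have hrec := Matrix.satisfiesRecurrence_trace_pow A.aeval_self_charpoly
  have hdeg : A.charpoly.natDegree = a := by simp [A.charpoly_natDegree_eq_dim]
  have hpos : ∀ i, (A ^ (1 + i)).trace = c :=
    hrec.eq_of_eq_on_window A.charpoly_monic fun i hi => hc _ (by omega) (by omega)
  have hcoeff : A.charpoly.coeff 0 ≠ 0 := fun h => by
    simpa [A.det_eq_sign_charpoly_coeff, h] using (A.isUnit_iff_isUnit_det.mp hA).ne_zero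
  refine ⟨fun m hm => ?_, ?_⟩
  · obtain ⟨i, rfl⟩ := Nat.exists_eq_add_of_le hm
    exact hpos i
  · have h0 := hrec.apply_zero_eq hcoeff fun i => by rw [add_comm]; exact hpos i
    simpa [Matrix.trace_one] using h0.symm

/-- Let `a ≥ 1` and let `A` be an invertible `a × a` matrix
over `ℚ`. If there is `c ∈ ℚ` with `tr(A^m) = c` for all `1 ≤ m ≤ a + 1`, then
`tr(A^m) = c` for every `m ≥ 1` and moreover `c = a`. -/
theorem stmt7 (a : ℕ) (ha : 1 ≤ a) (A : Matrix (Fin a) (Fin a) ℚ)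
    (hA : IsUnit A) (c : ℚ)
    (hc : ∀ m : ℕ, 1 ≤ m → m ≤ a + 1 → (A ^ m).trace = c) :
    (∀ m : ℕ, 1 ≤ m → (A ^ m).trace = c) ∧ c = a :=
  stmt7_general a A hA c hc
end
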